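/- The maps eb j n : Henc j (n+1) → Henc (j+1) n and eb⁻¹ j n : Henc (j+1) n → Henc j (n+1) are mutually inverse: for all h : Henc j (n+1), eb⁻¹ j n (eb j n h) = h, and for all e : Henc (j+1) n, eb j n (eb⁻¹ j n e) = e. Hence there is an equivalence Henc j (n+1) ≃ Henc (j+1) n. (This is the set-level, de Bruijn counterpart of the paper's Theorem 4.2 equivalence seb_j : (∫ ⊸ Henc_j) ≃ Henc_{j+1}.) -/
import Mathlib

/-- The impredicative HOAS encoding of λ-terms with `j` holes and `n` free variables. -/
def Henc (j n : ℕ) : Type 1 :=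
  ∀ (H : Type), (Fin j → H) → (Fin n → H) → (H → H → H) → ((H → H) → H) → H

/-- Exchange the distinguished last variable with a fresh hole `0`
and shift the remaining holes up by one. -/
def eb (j n : ℕ) (h : Henc j (n + 1)) : Henc (j + 1) n :=
  fun H hs vs ap lm => h H (hs ∘ Fin.succ) (Fin.snoc vs (hs 0)) ap lm

/-- Inverse direction: hole `0` becomes the distinguished last variable. -/
def ebInv (j n : ℕ) (e : Henc (j + 1) n) : Henc j (n + 1) :=
  fun H hs vs ap lm => e H (Fin.cons (vs (Fin.last n)) hs) (vs ∘ Fin.castSucc) ap lm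

theorem eb_ebInv_inverse (j n : ℕ) :
    (∀ h : Henc j (n + 1), ebInv j n (eb j n h) = h) ∧
    (∀ e : Henc (j + 1) n, eb j n (ebInv j n e) = e) ∧
    Nonempty (Henc j (n + 1) ≃ Henc (j + 1) n) := by
  have h1 : ∀ h : Henc j (n + 1), ebInv j n (eb j n h) = h := by
    intro h
    funext H hs vs ap lm
    simp only [ebInv, eb, Fin.cons_zero]
    have e1 : (Fin.cons (vs (Fin.last n)) hs : Fin (j+1) → H) ∘ Fin.succ = hs := by
      funext i; simp
    have e2 : (Fin.snoc (vs ∘ Fin.castSucc) (vs (Fin.last n)) : Fin (n+1) → H) = vs := by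
      funext i
      refine Fin.lastCases ?_ ?_ i
      · simp
      · intro i; simp
    rw [e1, e2]
  have h2 : ∀ e : Henc (j + 1) n, eb j n (ebInv j n e) = e := by
    intro e
    funext H hs vs ap lm
    simp only [eb, ebInv, Fin.snoc_last]
    have e1 : (Fin.cons (hs 0) (hs ∘ Fin.succ) : Fin (j+1) → H) = hs := by
      funext i
      refine Fin.cases ?_ ?_ i
      · simp
      · intro i; simp
    have e2 : (Fin.snoc vs (hs 0) : Fin (n+1) → H) ∘ Fin.castSucc = vs := by
      funext i; simp
    rw [e1, e2]
  exact ⟨h1, h2, ⟨⟨eb j n, ebInv j n, h1, h2⟩⟩⟩
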